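/- (Performance difference) For any two policies π, π' on a finite discounted MDP and any start distribution μ, V^{π'}(μ) − V^{π}(μ) = (1/(1−γ)) ∑_{s,a} d^{π'}_μ(s) π'(a|s) [Q^π(s,a) − V^π(s)], where d^{π'}_μ(s) = (1−γ)∑_{k≥0} γ^k P^{π'}(S_k = s | S_0 ∼ μ). -/

import Mathlib

/-! Let `T` be the one-step operator of `π'` on `S → ℝ` with the sup norm, so `‖γ • T‖ < 1` and
the resolvent `G = ∑ₙ (γ • T)ⁿ = (1 - γ • T)⁻¹` is a Neumann series. Then `V^{π'} = G r_{π'}`, and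
`G (1 - γ • T) = 1` gives `V^{π'} - V = G (r_{π'} + γ T V - V)` for every `V`; for `V = V^π` the
argument of `G` is the advantage `∑ₐ π'(a|s) (Q^π(s,a) - V^π(s))`. Since the distribution
pushforward is the adjoint of `T`, `∑ₛ d^{π'}_μ(s) f(s) = (1 - γ) ⟨μ, G f⟩` for every `f`. -/

/-- One-step expectation operator under policy `π`: `(T^π f)(s) = E[f(S_1) | S_0 = s]`. -/
noncomputable def stepOp {S A : Type*} [Fintype S] [Fintype A]
    (P : S → A → S → ℝ) (π : S → A → ℝ) (f : S → ℝ) : S → ℝ :=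
  fun s => ∑ a, π s a * ∑ s', P s a s' * f s'

/-- Discounted value function `V^π(s) = ∑_{k≥0} γ^k E[r^π(S_k) | S_0 = s]`. -/
noncomputable def Vpi {S A : Type*} [Fintype S] [Fintype A]
    (P : S → A → S → ℝ) (R : S → A → ℝ) (γ : ℝ) (π : S → A → ℝ) (s : S) : ℝ :=
  ∑' k : ℕ, γ ^ k * ((stepOp P π)^[k] (fun t => ∑ a, π t a * R t a)) s

/-- Discounted action-value function `Q^π(s,a) = R(s,a) + γ ∑_{s'} P(s'|s,a) V^π(s')`. -/
noncomputable def Qpi {S A : Type*} [Fintype S] [Fintype A]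
    (P : S → A → S → ℝ) (R : S → A → ℝ) (γ : ℝ) (π : S → A → ℝ) (s : S) (a : A) : ℝ :=
  R s a + γ * ∑ s', P s a s' * Vpi P R γ π s'

/-- One-step distribution pushforward under policy `π`. -/
noncomputable def pushOp {S A : Type*} [Fintype S] [Fintype A]
    (P : S → A → S → ℝ) (π : S → A → ℝ) (D : S → ℝ) : S → ℝ :=
  fun s' => ∑ s, ∑ a, D s * π s a * P s a s'

/-- Discounted state visitation distribution
`d^π_μ(s) = (1-γ) ∑_{k≥0} γ^k P^π(S_k = s | S_0 ∼ μ)`. -/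
noncomputable def dvisit {S A : Type*} [Fintype S] [Fintype A]
    (P : S → A → S → ℝ) (γ : ℝ) (π : S → A → ℝ) (μ : S → ℝ) (s : S) : ℝ :=
  (1 - γ) * ∑' k : ℕ, γ ^ k * ((pushOp P π)^[k] μ) s

open Finset

section

variable {S A : Type*} [Fintype S] [Fintype A] (P : S → A → S → ℝ) (π : S → A → ℝ)

noncomputable def stepOpCLM : (S → ℝ) →L[ℝ] (S → ℝ) :=
  LinearMap.toContinuousLinearMap
    { toFun := stepOp P π
      map_add' := fun f g => by
        ext s
        simp only [stepOp, Pi.add_apply, mul_add, sum_add_distrib]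
      map_smul' := fun c f => by
        ext s
        simp only [stepOp, Pi.smul_apply, smul_eq_mul, RingHom.id_apply, mul_sum]
        exact sum_congr rfl fun a _ => sum_congr rfl fun s' _ => by ring }

@[simp]
lemma coe_stepOpCLM : ⇑(stepOpCLM P π) = stepOp P π := rfl

variable {P π}

lemma norm_stepOp_le (hP0 : ∀ s a s', 0 ≤ P s a s') (hP1 : ∀ s a, ∑ s', P s a s' = 1)
    (hπ0 : ∀ s a, 0 ≤ π s a) (hπ1 : ∀ s, ∑ a, π s a = 1) (f : S → ℝ) :
    ‖stepOp P π f‖ ≤ ‖f‖ := by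
  refine (pi_norm_le_iff_of_nonneg (norm_nonneg f)).2 fun s => ?_
  calc ‖stepOp P π f s‖ ≤ ∑ a, π s a * ∑ s', P s a s' * ‖f‖ := by
        refine (norm_sum_le _ _).trans (sum_le_sum fun a _ => ?_)
        rw [norm_mul, Real.norm_of_nonneg (hπ0 s a)]
        refine mul_le_mul_of_nonneg_left ((norm_sum_le _ _).trans (sum_le_sum fun s' _ => ?_))
          (hπ0 s a)
        rw [norm_mul, Real.norm_of_nonneg (hP0 s a s')]
        exact mul_le_mul_of_nonneg_left (norm_le_pi_norm f s') (hP0 s a s')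
    _ = ‖f‖ := by simp only [← sum_mul, hP1, hπ1, one_mul]

lemma norm_smul_stepOpCLM_lt_one (hP0 : ∀ s a s', 0 ≤ P s a s') (hP1 : ∀ s a, ∑ s', P s a s' = 1)
    (hπ0 : ∀ s a, 0 ≤ π s a) (hπ1 : ∀ s, ∑ a, π s a = 1) {γ : ℝ} (hγ : |γ| < 1) :
    ‖γ • stepOpCLM P π‖ < 1 := by
  have hT : ‖stepOpCLM P π‖ ≤ 1 := ContinuousLinearMap.opNorm_le_bound _ zero_le_one fun f => by
    simpa using norm_stepOp_le hP0 hP1 hπ0 hπ1 f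
  calc ‖γ • stepOpCLM P π‖ ≤ ‖γ‖ * ‖stepOpCLM P π‖ := ContinuousLinearMap.opNorm_smul_le _ _
    _ ≤ |γ| * 1 := by rw [Real.norm_eq_abs]; gcongr
    _ < 1 := by rwa [mul_one]

variable (P π) in
noncomputable def discountedResolvent (γ : ℝ) : (S → ℝ) →L[ℝ] (S → ℝ) :=
  ∑' n, (γ • stepOpCLM P π) ^ n

variable {γ : ℝ}

lemma hasSum_discountedResolvent_apply (h : ‖γ • stepOpCLM P π‖ < 1) (f : S → ℝ) (s : S) :
    HasSum (fun n => γ ^ n * (stepOp P π)^[n] f s) (discountedResolvent P π γ f s) := by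
  have := (summable_geometric_of_norm_lt_one h).hasSum.mapL (ContinuousLinearMap.apply ℝ _ f)
  simpa [discountedResolvent, smul_pow, FunLike.coe_pow_eq_iterate] using Pi.hasSum.1 this s

lemma discountedResolvent_mul_one_sub (h : ‖γ • stepOpCLM P π‖ < 1) :
    discountedResolvent P π γ * (1 - γ • stepOpCLM P π) = 1 :=
  geom_series_mul_neg _ h

lemma sum_pushOp_mul (D f : S → ℝ) :
    ∑ s, pushOp P π D s * f s = ∑ s, D s * stepOp P π f s := by
  simp only [pushOp, stepOp, sum_mul, mul_sum]
  rw [sum_comm]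
  refine sum_congr rfl fun s _ => ?_
  rw [sum_comm]
  exact sum_congr rfl fun a _ => sum_congr rfl fun s' _ => by ring

lemma sum_pushOp_iterate_mul (k : ℕ) (D f : S → ℝ) :
    ∑ s, (pushOp P π)^[k] D s * f s = ∑ s, D s * (stepOp P π)^[k] f s := by
  induction k generalizing f with
  | zero => rfl
  | succ k ih => rw [Function.iterate_succ_apply', sum_pushOp_mul, ih, Function.iterate_succ_apply]

/-- Pairing with `Pi.single s 1` turns the visitation series at `s` into a finite combination of
value series, which converge. -/
lemma summable_pushOp_iterate (h : ‖γ • stepOpCLM P π‖ < 1) (D : S → ℝ) (s : S) :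
    Summable fun k => γ ^ k * (pushOp P π)^[k] D s := by
  classical
  have hpair : ∀ k, γ ^ k * (pushOp P π)^[k] D s =
      ∑ t, D t * (γ ^ k * (stepOp P π)^[k] (Pi.single s 1) t) := fun k => by
    simp_rw [mul_left_comm (D _), ← mul_sum, ← sum_pushOp_iterate_mul, Pi.single_apply]
    simp
  simp_rw [hpair]
  exact summable_sum fun t _ =>
    ((hasSum_discountedResolvent_apply h _ t).summable.mul_left (D t))

lemma sum_dvisit_mul (h : ‖γ • stepOpCLM P π‖ < 1) (μ f : S → ℝ) :
    ∑ s, dvisit P γ π μ s * f s = (1 - γ) * ∑ s, μ s * discountedResolvent P π γ f s := by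
  have hvisit : ∑ s, (∑' k, γ ^ k * (pushOp P π)^[k] μ s) * f s
      = ∑' k, γ ^ k * ∑ s, (pushOp P π)^[k] μ s * f s := by
    simp_rw [← tsum_mul_right]
    rw [← Summable.tsum_finsetSum fun s _ => (summable_pushOp_iterate h μ s).mul_right (f s)]
    exact tsum_congr fun k => by rw [mul_sum]; exact sum_congr rfl fun s _ => by ring
  have hvalue : HasSum (fun k => ∑ s, μ s * (γ ^ k * (stepOp P π)^[k] f s))
      (∑ s, μ s * discountedResolvent P π γ f s) :=
    hasSum_sum fun s _ => (hasSum_discountedResolvent_apply h f s).mul_left (μ s)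
  simp only [dvisit, mul_assoc, ← mul_sum, hvisit, ← hvalue.tsum_eq]
  congr 1
  refine tsum_congr fun k => ?_
  rw [sum_pushOp_iterate_mul, mul_sum]
  exact sum_congr rfl fun s _ => by ring

def policyReward (R π : S → A → ℝ) (s : S) : ℝ := ∑ a, π s a * R s a

variable (R : S → A → ℝ)

lemma Vpi_eq_discountedResolvent (h : ‖γ • stepOpCLM P π‖ < 1) :
    Vpi P R γ π = discountedResolvent P π γ (policyReward R π) :=
  funext fun s => (hasSum_discountedResolvent_apply h (policyReward R π) s).tsum_eq

lemma Vpi_sub_eq_discountedResolvent (h : ‖γ • stepOpCLM P π‖ < 1) (V : S → ℝ) :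
    Vpi P R γ π - V = discountedResolvent P π γ (policyReward R π + γ • stepOp P π V - V) :=
  calc Vpi P R γ π - V
      = discountedResolvent P π γ (policyReward R π)
          - (discountedResolvent P π γ * (1 - γ • stepOpCLM P π)) V := by
        rw [Vpi_eq_discountedResolvent R h, discountedResolvent_mul_one_sub h,
          one_apply_eq_self]
    _ = discountedResolvent P π γ (policyReward R π + γ • stepOp P π V - V) := by
        rw [mul_apply_eq_comp, ← map_sub]
        congr 1
        simp only [sub_apply, one_apply_eq_self, smul_apply, coe_stepOpCLM]
        abel

lemma sum_mul_Qpi_sub_Vpi {π' : S → A → ℝ} (hπ'1 : ∀ s, ∑ a, π' s a = 1) (s : S) :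
    ∑ a, π' s a * (Qpi P R γ π s a - Vpi P R γ π s)
      = (policyReward R π' + γ • stepOp P π' (Vpi P R γ π) - Vpi P R γ π) s := by
  simp only [Qpi, stepOp, policyReward, Pi.add_apply, Pi.sub_apply, Pi.smul_apply, smul_eq_mul,
    mul_sub, mul_add, sum_sub_distrib, sum_add_distrib, ← sum_mul, hπ'1, one_mul, mul_sum]
  congr 2
  exact sum_congr rfl fun a _ => sum_congr rfl fun s' _ => mul_left_comm (π' s a) γ _

end

theorem performance_difference_general {S A : Type*} [Fintype S] [Fintype A]
    (P : S → A → S → ℝ) (hP0 : ∀ s a s', 0 ≤ P s a s') (hP1 : ∀ s a, ∑ s', P s a s' = 1)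
    (R : S → A → ℝ)
    (γ : ℝ) (hγ0 : 0 < γ) (hγ1 : γ < 1)
    (π π' : S → A → ℝ)
    (hπ'0 : ∀ s a, 0 ≤ π' s a) (hπ'1 : ∀ s, ∑ a, π' s a = 1)
    (μ : S → ℝ) :
    (∑ s, μ s * Vpi P R γ π' s) - (∑ s, μ s * Vpi P R γ π s)
      = (1 / (1 - γ)) * ∑ s, ∑ a, dvisit P γ π' μ s * π' s a *
          (Qpi P R γ π s a - Vpi P R γ π s) := by
  have h := norm_smul_stepOpCLM_lt_one hP0 hP1 hπ'0 hπ'1 (abs_lt.2 ⟨by linarith, hγ1⟩)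
  have hγ : 1 - γ ≠ 0 := by linarith
  calc (∑ s, μ s * Vpi P R γ π' s) - (∑ s, μ s * Vpi P R γ π s)
      = ∑ s, μ s * (Vpi P R γ π' - Vpi P R γ π) s := by
        simp only [Pi.sub_apply, mul_sub, sum_sub_distrib]
    _ = (1 / (1 - γ)) * ∑ s, dvisit P γ π' μ s *
          (policyReward R π' + γ • stepOp P π' (Vpi P R γ π) - Vpi P R γ π) s := by
        rw [Vpi_sub_eq_discountedResolvent R h, sum_dvisit_mul h]
        field_simp
    _ = _ := by
        simp only [← sum_mul_Qpi_sub_Vpi R hπ'1, mul_sum, mul_assoc]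

/-- Performance difference lemma:
`V^{π'}(μ) - V^{π}(μ) = (1/(1-γ)) ∑_{s,a} d^{π'}_μ(s) π'(a|s) [Q^π(s,a) - V^π(s)]`. -/
theorem performance_difference {S A : Type*} [Fintype S] [Fintype A]
    (P : S → A → S → ℝ) (hP0 : ∀ s a s', 0 ≤ P s a s') (hP1 : ∀ s a, ∑ s', P s a s' = 1)
    (R : S → A → ℝ) (hR0 : ∀ s a, 0 ≤ R s a) (hR1 : ∀ s a, R s a ≤ 1)
    (γ : ℝ) (hγ0 : 0 < γ) (hγ1 : γ < 1)
    (π π' : S → A → ℝ)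
    (hπ0 : ∀ s a, 0 ≤ π s a) (hπ1 : ∀ s, ∑ a, π s a = 1)
    (hπ'0 : ∀ s a, 0 ≤ π' s a) (hπ'1 : ∀ s, ∑ a, π' s a = 1)
    (μ : S → ℝ) (hμ0 : ∀ s, 0 ≤ μ s) (hμ1 : ∑ s, μ s = 1) :
    (∑ s, μ s * Vpi P R γ π' s) - (∑ s, μ s * Vpi P R γ π s)
      = (1 / (1 - γ)) * ∑ s, ∑ a, dvisit P γ π' μ s * π' s a *
          (Qpi P R γ π s a - Vpi P R γ π s) :=
  performance_difference_general P hP0 hP1 R γ hγ0 hγ1 π π' hπ'0 hπ'1 μ
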